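/- For any θ ∈ (0,1), any y ∈ ℝ, z, ẑ ∈ ℝ^d, and any function g : ℝ^d → ℝ that is concave and satisfies |g(w)| ≤ α + β|y| + (γ/2)|w|² for all w, the inequality g(ẑ) ≥ θ g(z) − (1−θ)(α + β|y|) − (γ/(2(1−θ)))|θz − ẑ|² holds. -/

import Mathlib

open Set

variable {E : Type*} [NormedAddCommGroup E] [NormedSpace ℝ E]

/-- Write `zhat` as the convex combination `θ • z + (1 - θ) • w` with
`w = (1 - θ)⁻¹ • (zhat - θ • z)`, apply concavity, and bound `g w` from below. -/
theorem ConcaveOn.le_of_neg_quadratic_le {g : E → ℝ} (hg : ConcaveOn ℝ univ g) {B c θ : ℝ}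
    (hθ : θ ∈ Ioo 0 1) (hlow : ∀ w, -B - c * ‖w‖ ^ 2 ≤ g w) (z zhat : E) :
    θ * g z - (1 - θ) * B - c / (1 - θ) * ‖θ • z - zhat‖ ^ 2 ≤ g zhat := by
  have h1θ : 0 < 1 - θ := sub_pos.mpr hθ.2
  set w : E := (1 - θ)⁻¹ • (zhat - θ • z)
  have hzhat : θ • z + (1 - θ) • w = zhat := by
    rw [smul_inv_smul₀ h1θ.ne', add_sub_cancel]
  have hnorm : ‖w‖ = ‖θ • z - zhat‖ / (1 - θ) := by
    rw [norm_smul, norm_inv, Real.norm_of_nonneg h1θ.le, norm_sub_rev, inv_mul_eq_div]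
  have hconcave : θ * g z + (1 - θ) * g w ≤ g zhat := by
    simpa only [smul_eq_mul, hzhat] using
      hg.2 (mem_univ z) (mem_univ w) hθ.1.le h1θ.le (add_sub_cancel θ 1)
  calc θ * g z - (1 - θ) * B - c / (1 - θ) * ‖θ • z - zhat‖ ^ 2
      = θ * g z + (1 - θ) * (-B - c * ‖w‖ ^ 2) := by
        rw [hnorm]
        field_simp
        ring
    _ ≤ θ * g z + (1 - θ) * g w := by
        gcongr θ * g z + ?_
        exact mul_le_mul_of_nonneg_left (hlow w) h1θ.le
    _ ≤ g zhat := hconcave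

theorem stmt_8_general {d : ℕ} (α β γ θ y : ℝ)
    (hθ : θ ∈ Set.Ioo (0:ℝ) 1)
    (g : EuclideanSpace ℝ (Fin d) → ℝ) (hconc : ConcaveOn ℝ Set.univ g)
    (hg : ∀ w, |g w| ≤ α + β * |y| + γ / 2 * ‖w‖ ^ 2)
    (z zhat : EuclideanSpace ℝ (Fin d)) :
    θ * g z - (1 - θ) * (α + β * |y|) - γ / (2 * (1 - θ)) * ‖θ • z - zhat‖ ^ 2 ≤ g zhat := by
  have hlow : ∀ w, -(α + β * |y|) - γ / 2 * ‖w‖ ^ 2 ≤ g w := fun w => by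
    linarith [(abs_le.mp (hg w)).1]
  simpa only [div_div] using hconc.le_of_neg_quadratic_le hθ hlow z zhat

theorem stmt_8 {d : ℕ} (α β γ θ y : ℝ) (hα : 0 ≤ α) (hβ : 0 ≤ β) (hγ : 0 < γ)
    (hθ : θ ∈ Set.Ioo (0:ℝ) 1)
    (g : EuclideanSpace ℝ (Fin d) → ℝ) (hconc : ConcaveOn ℝ Set.univ g)
    (hg : ∀ w, |g w| ≤ α + β * |y| + γ / 2 * ‖w‖ ^ 2)
    (z zhat : EuclideanSpace ℝ (Fin d)) :
    θ * g z - (1 - θ) * (α + β * |y|) - γ / (2 * (1 - θ)) * ‖θ • z - zhat‖ ^ 2 ≤ g zhat :=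
  stmt_8_general α β γ θ y hθ g hconc hg z zhat
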